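/- There exists a constant C such that for all ξ ∈ ℝ^d, 1/|I(ξ)| ≤ C·e^{−|ξ|}·(1+|ξ|)^{(d−1)/2}, where I(ξ) = ∫_{S^{d−1}} e^{−⟨ω,ξ⟩} dω. -/

import Mathlib

/-!
Write `ξ = -ρ v` with `‖v‖ = 1`. On the cap `{ω : ⟪ω, v⟫ ≥ 1 - t}` the integrand is at least
`exp (ρ (1 - t))`, and the cap has measure `≳ t ^ ((d - 1) / 2)`: the cone over it contains a box
of height `1 / 4` along `v` and width `≍ √t` in the `d - 1` orthogonal directions. The choice
`t = 1 / (1 + ρ)` costs only a factor `e` in the exponential and gives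
`I(ξ) ≳ e ^ ρ (1 + ρ) ^ (-(d - 1) / 2)`.
-/
open MeasureTheory Metric Set
open scoped ENNReal RealInnerProductSpace Pointwise

variable {E : Type*} [NormedAddCommGroup E] [InnerProductSpace ℝ E]

def sphereCap (v : E) (t : ℝ) : Set (sphere (0 : E) 1) := {ω | 1 - t ≤ ⟪(ω : E), v⟫}

theorem isClosed_sphereCap (v : E) (t : ℝ) : IsClosed (sphereCap v t) :=
  isClosed_le continuous_const (continuous_subtype_val.inner continuous_const)

theorem mem_Ioo_smul_sphereCap {v x : E} {t : ℝ} (hx0 : 0 < ‖x‖) (hx1 : ‖x‖ < 1)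
    (hx : (1 - t) * ‖x‖ ≤ ⟪x, v⟫) : x ∈ Ioo (0 : ℝ) 1 • (Subtype.val '' sphereCap v t) := by
  have hx0' : ‖x‖ ≠ 0 := hx0.ne'
  refine mem_smul.2 ⟨‖x‖, ⟨hx0, hx1⟩, ‖x‖⁻¹ • x, ⟨⟨_, ?_⟩, ?_, rfl⟩, smul_inv_smul₀ hx0' x⟩
  · simp [norm_smul, hx0']
  · change 1 - t ≤ ⟪‖x‖⁻¹ • x, v⟫
    rwa [real_inner_smul_left, inv_mul_eq_div, le_div_iff₀ hx0]

theorem exists_orthonormalBasis_apply_zero_eq {n : ℕ} [FiniteDimensional ℝ E]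
    (hE : Module.finrank ℝ E = n + 1) {v : E} (hv : ‖v‖ = 1) :
    ∃ b : OrthonormalBasis (Fin (n + 1)) ℝ E, b 0 = v := by
  have hv' : Orthonormal ℝ (({0} : Set (Fin (n + 1))).domRestrict fun _ => v) :=
    orthonormal_subsingleton_iff.2 fun _ => hv
  obtain ⟨b, hb⟩ := hv'.exists_orthonormalBasis_extension_of_card_eq (by simpa using hE)
  exact ⟨b, hb 0 rfl⟩

def thinBox (n : ℕ) (a : ℝ) : Set (EuclideanSpace ℝ (Fin (n + 1))) :=
  WithLp.ofLp ⁻¹' univ.pi (Fin.cons (Icc (1 / 2) (3 / 4)) fun _ => Icc (-a) a)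

theorem isClosed_thinBox (n : ℕ) (a : ℝ) : IsClosed (thinBox n a) := by
  refine (isClosed_set_pi fun i _ => ?_).preimage (PiLp.continuous_ofLp 2 _)
  cases i using Fin.cases <;> simp [isClosed_Icc]

theorem volume_thinBox (n : ℕ) {a : ℝ} (ha : 0 ≤ a) :
    volume (thinBox n a) = ENNReal.ofReal ((2 * a) ^ n / 4) := by
  rw [thinBox, ← MeasurableEquiv.coe_toLp_symm,
    (EuclideanSpace.volume_preserving_symm_measurableEquiv_toLp _).measure_preimage
      (MeasurableSet.univ_pi fun i => ?_).nullMeasurableSet, volume_pi_pi, Fin.prod_univ_succ]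
  · simp only [Fin.cons_zero, Fin.cons_succ, Real.volume_Icc, Finset.prod_const,
      Finset.card_univ, Fintype.card_fin]
    rw [← ENNReal.ofReal_pow (by linarith), ← ENNReal.ofReal_mul (by norm_num)]
    congr 1
    ring
  · cases i using Fin.cases <;> simp [measurableSet_Icc]

theorem repr_preimage_thinBox_subset {n : ℕ} (b : OrthonormalBasis (Fin (n + 1)) ℝ E)
    {t a : ℝ} (ht : t ≤ 1) (ha : n * a ^ 2 ≤ t / 4) :
    b.repr ⁻¹' thinBox n a ⊆ Ioo (0 : ℝ) 1 • (Subtype.val '' sphereCap (b 0) t) := by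
  intro x hx
  set y := b.repr x
  have hy0 : y 0 ∈ Icc (1 / 2) (3 / 4) := hx 0 (mem_univ _)
  have hy_succ (i : Fin n) : y i.succ ^ 2 ≤ a ^ 2 := by
    have hi : y i.succ ∈ Icc (-a) a := hx i.succ (mem_univ _)
    exact sq_le_sq' hi.1 hi.2
  have hinner : ⟪x, b 0⟫ = y 0 := by rw [b.repr_apply_apply, real_inner_comm]
  have hnorm : ‖x‖ ^ 2 ≤ y 0 ^ 2 + t / 4 := by
    rw [← b.repr.norm_map x, EuclideanSpace.norm_sq_eq, Fin.sum_univ_succ]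
    calc _ ≤ y 0 ^ 2 + ∑ _i : Fin n, a ^ 2 := by
          simp only [Real.norm_eq_abs, sq_abs]
          exact add_le_add_right (Finset.sum_le_sum fun i _ => hy_succ i) _
      _ ≤ _ := by simpa using ha
  have hge : y 0 ≤ ‖x‖ := by
    simpa [hinner, b.orthonormal.1 0] using real_inner_le_norm x (b 0)
  have ht0 : 0 ≤ t := by nlinarith [sq_nonneg a, (n.cast_nonneg : (0 : ℝ) ≤ n)]
  refine mem_Ioo_smul_sphereCap (by linarith [hy0.1]) (by nlinarith [hy0.1, hy0.2]) ?_
  have hle : ‖x‖ ≤ y 0 + t / 4 := by nlinarith [hy0.1]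
  rw [hinner]
  nlinarith [hy0.1]

theorem le_toSphere_sphereCap [FiniteDimensional ℝ E] [MeasurableSpace E] [BorelSpace E] {n : ℕ}
    (hE : Module.finrank ℝ E = n + 1) {v : E} (hv : ‖v‖ = 1) {t : ℝ} (ht0 : 0 < t)
    (ht1 : t ≤ 1) :
    ENNReal.ofReal (t ^ ((n : ℝ) / 2) / (4 * (n + 1) ^ ((n : ℝ) / 2))) ≤
      (volume : Measure E).toSphere (sphereCap v t) := by
  obtain ⟨b, rfl⟩ := exists_orthonormalBasis_apply_zero_eq hE hv
  set a := √t / (2 * √(n + 1))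
  have ha : n * a ^ 2 ≤ t / 4 := by
    rw [div_pow, mul_pow, Real.sq_sqrt ht0.le, Real.sq_sqrt (by positivity), mul_div_assoc',
      div_le_div_iff₀ (by positivity) (by norm_num)]
    nlinarith
  calc ENNReal.ofReal (t ^ ((n : ℝ) / 2) / (4 * (n + 1) ^ ((n : ℝ) / 2)))
      = volume (b.repr ⁻¹' thinBox n a) := by
        rw [b.measurePreserving_repr.measure_preimage (isClosed_thinBox n a).nullMeasurableSet,
          volume_thinBox n (by positivity), Real.rpow_div_two_eq_sqrt _ ht0.le,
          Real.rpow_div_two_eq_sqrt _ (by positivity), Real.rpow_natCast, Real.rpow_natCast]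
        rw [show 2 * a = √t / √(n + 1) by simp only [a]; field_simp, div_pow, div_div, mul_comm]
    _ ≤ volume (Ioo (0 : ℝ) 1 • (Subtype.val '' sphereCap (b 0) t)) :=
        measure_mono (repr_preimage_thinBox_subset b ht1 ha)
    _ ≤ (Module.finrank ℝ E : ℝ≥0∞) *
          volume (Ioo (0 : ℝ) 1 • (Subtype.val '' sphereCap (b 0) t)) :=
        le_mul_of_one_le_left bot_le (by simp [hE] : (1 : ℝ≥0∞) ≤ Module.finrank ℝ E)
    _ = (volume : Measure E).toSphere (sphereCap (b 0) t) :=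
        (Measure.toSphere_apply' _ (isClosed_sphereCap _ _).measurableSet).symm

theorem exists_norm_eq_one_and_eq_neg_norm_smul [Nontrivial E] (ξ : E) :
    ∃ v : E, ‖v‖ = 1 ∧ ξ = -(‖ξ‖ • v) := by
  rcases eq_or_ne ξ 0 with rfl | hξ
  · obtain ⟨v, hv⟩ := exists_norm_eq E zero_le_one
    exact ⟨v, hv, by simp⟩
  · exact ⟨-(‖ξ‖⁻¹ • ξ), by simp [norm_smul, hξ], by simp [smul_smul, hξ]⟩

section Laplace

variable [FiniteDimensional ℝ E] [MeasurableSpace E] [BorelSpace E]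

noncomputable def sphereLaplace (ξ : E) : ℝ :=
  ∫ ω : sphere (0 : E) 1, Real.exp (-⟪(ω : E), ξ⟫) ∂(volume : Measure E).toSphere

theorem integrable_exp_neg_inner_sphere (ξ : E) :
    Integrable (fun ω : sphere (0 : E) 1 => Real.exp (-⟪(ω : E), ξ⟫))
      (volume : Measure E).toSphere := by
  refine Continuous.integrable_of_hasCompactSupport ?_ (.of_compactSpace _)
  fun_prop

theorem exp_mul_toSphere_sphereCap_le_sphereLaplace (v : E) {ρ : ℝ} (hρ : 0 ≤ ρ) (t : ℝ) :
    Real.exp (ρ * (1 - t)) * ((volume : Measure E).toSphere (sphereCap v t)).toReal ≤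
      sphereLaplace (-(ρ • v)) := by
  set μ := (volume : Measure E).toSphere
  have hcap : ∀ ω ∈ sphereCap v t, Real.exp (ρ * (1 - t)) ≤ Real.exp (-⟪(ω : E), -(ρ • v)⟫) := by
    intro ω hω
    rw [inner_neg_right, neg_neg, real_inner_smul_right]
    exact Real.exp_le_exp.2 (mul_le_mul_of_nonneg_left hω hρ)
  calc Real.exp (ρ * (1 - t)) * (μ (sphereCap v t)).toReal
      = μ.real (sphereCap v t) • Real.exp (ρ * (1 - t)) := by rw [smul_eq_mul, mul_comm]; rfl
    _ ≤ ∫ ω in sphereCap v t, Real.exp (-⟪(ω : E), -(ρ • v)⟫) ∂μ :=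
        setIntegral_ge_of_const_le (isClosed_sphereCap v t).measurableSet (measure_ne_top _ _)
          hcap (integrable_exp_neg_inner_sphere _).integrableOn
    _ ≤ sphereLaplace (-(ρ • v)) :=
        setIntegral_le_integral (integrable_exp_neg_inner_sphere _)
          (.of_forall fun _ => (Real.exp_pos _).le)

theorem le_sphereLaplace {n : ℕ} (hE : Module.finrank ℝ E = n + 1) (ξ : E) :
    Real.exp ‖ξ‖ / (4 * Real.exp 1 * (n + 1) ^ ((n : ℝ) / 2) * (1 + ‖ξ‖) ^ ((n : ℝ) / 2)) ≤
      sphereLaplace ξ := by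
  have : Nontrivial E := Module.nontrivial_of_finrank_eq_succ hE
  obtain ⟨v, hv, hξv⟩ := exists_norm_eq_one_and_eq_neg_norm_smul ξ
  set ρ := ‖ξ‖
  have hρ : 0 ≤ ρ := norm_nonneg ξ
  set t := (1 + ρ)⁻¹
  have ht0 : 0 < t := by positivity
  have ht1 : t ≤ 1 := inv_le_one_of_one_le₀ (by linarith)
  have hexp : ρ - 1 ≤ ρ * (1 - t) := by
    rw [mul_one_sub, ← div_eq_mul_inv, sub_le_sub_iff_left, div_le_one (by positivity)]
    linarith
  have hcap := le_toSphere_sphereCap hE hv ht0 ht1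
  rw [ENNReal.ofReal_le_iff_le_toReal (measure_ne_top _ _)] at hcap
  calc _ = Real.exp (ρ - 1) * (t ^ ((n : ℝ) / 2) / (4 * (n + 1) ^ ((n : ℝ) / 2))) := by
        rw [Real.exp_sub, Real.inv_rpow (by positivity)]
        field_simp
    _ ≤ Real.exp (ρ * (1 - t)) * ((volume : Measure E).toSphere (sphereCap v t)).toReal :=
        mul_le_mul (Real.exp_le_exp.2 hexp) hcap (by positivity) (Real.exp_pos _).le
    _ ≤ sphereLaplace ξ := hξv ▸ exp_mul_toSphere_sphereCap_le_sphereLaplace v hρ t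

end Laplace

/-- `1/|I(ξ)| ≤ C e^{−|ξ|} (1+|ξ|)^{(d−1)/2}`, where
`I(ξ) = ∫_{S^{d−1}} e^{−⟨ω,ξ⟩} dω`. -/
theorem stmt_10 (d : ℕ) (hd : 1 ≤ d) :
    ∃ C : ℝ, ∀ ξ : EuclideanSpace ℝ (Fin d),
      1 / |∫ ω : sphere (0 : EuclideanSpace ℝ (Fin d)) 1,
            Real.exp (-(inner (𝕜 := ℝ) (ω : EuclideanSpace ℝ (Fin d)) ξ))
            ∂((volume : Measure (EuclideanSpace ℝ (Fin d))).toSphere)| ≤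
        C * Real.exp (-‖ξ‖) * (1 + ‖ξ‖) ^ (((d : ℝ) - 1) / 2) := by
  obtain ⟨n, rfl⟩ : ∃ n, d = n + 1 := ⟨d - 1, by omega⟩
  refine ⟨4 * Real.exp 1 * (n + 1) ^ ((n : ℝ) / 2), fun ξ => ?_⟩
  have hlow := le_sphereLaplace finrank_euclideanSpace_fin ξ
  have hexponent : (((n + 1 : ℕ) : ℝ) - 1) / 2 = (n : ℝ) / 2 := by push_cast; ring
  calc _ ≤ 1 / (Real.exp ‖ξ‖ /
          (4 * Real.exp 1 * (n + 1) ^ ((n : ℝ) / 2) * (1 + ‖ξ‖) ^ ((n : ℝ) / 2))) :=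
        one_div_le_one_div_of_le (by positivity) (hlow.trans (le_abs_self _))
    _ = _ := by
        rw [hexponent, one_div_div, Real.exp_neg]
        ring
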